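/- The trigamma function at 1/4 satisfies ψ'(1/4) = π² + 8G, where G is Catalan's constant. -/

import Mathlib

open Real

/-- The digamma function `ψ(x) = Γ'(x)/Γ(x)`. -/
noncomputable def digamma (x : ℝ) : ℝ := deriv Real.Gamma x / Real.Gamma x

/-- Catalan's constant `G = ∑ (-1)ⁿ/(2n+1)²`. -/
noncomputable def catalanConstant : ℝ := ∑' n : ℕ, (-1 : ℝ)^n / (2*n+1)^2

/-!
Differentiating the Gauss limit `log Γ(x) = lim (x log n + log n! - ∑_{m ≤ n} log (x + m))`
term by term gives `ψ(x) = -γ + ∑ (1/(m+1) - 1/(x+m))`, and once more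
`ψ'(x) = ∑ 1/(x+m)²`. At `x = 1/4` this is `16 A` with `A = ∑ 1/(4k+1)²`. Writing also
`B = ∑ 1/(4k+3)²`, the odd reciprocal squares give `A + B = π²/8` while `G = A - B`,
so `16 A = 8 (A + B) + 8 (A - B) = π² + 8 G`.
-/

open Filter Topology Set

theorem summable_one_div_add_sq {c : ℝ} (hc : 0 < c) :
    Summable fun m : ℕ => 1 / (c + m) ^ 2 := by
  refine ((Real.summable_one_div_nat_add_rpow c 2).mpr one_lt_two).congr fun m => ?_
  rw [abs_of_pos (by positivity), add_comm, Real.rpow_two]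

noncomputable def digammaSeries (x : ℝ) : ℝ :=
  -eulerMascheroniConstant + ∑' m : ℕ, (1 / (m + 1) - 1 / (x + m))

theorem tendsto_log_sub_sum_range_succ_one_div :
    Tendsto (fun n : ℕ => log n - ∑ m ∈ Finset.range (n + 1), 1 / ((m : ℝ) + 1)) atTop
      (𝓝 (-eulerMascheroniConstant)) := by
  have h := (tendsto_harmonic_sub_log.add tendsto_one_div_add_atTop_nhds_zero_nat).neg
  rw [add_zero] at h
  refine h.congr fun n => ?_
  simp only [harmonic, one_div]
  push_cast
  rw [Finset.sum_range_succ]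
  ring

theorem abs_one_div_add_one_sub_one_div_add_le {a b y : ℝ} (ha : 0 < a) (ha1 : a ≤ 1)
    (hy : y ∈ Ioo a b) (m : ℕ) :
    |1 / ((m : ℝ) + 1) - 1 / (y + m)| ≤ (1 + b) / (a + m) ^ 2 := by
  obtain ⟨hay, hyb⟩ := hy
  have hm : (0 : ℝ) ≤ m := m.cast_nonneg
  have hym : 0 < y + m := by linarith
  have hden : (a + m) ^ 2 ≤ ((m : ℝ) + 1) * (y + m) := by nlinarith
  have heq : 1 / ((m : ℝ) + 1) - 1 / (y + m) = (y - 1) / ((m + 1) * (y + m)) := by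
    field_simp
    ring
  rw [heq, abs_div, abs_of_pos (mul_pos (by positivity) hym)]
  exact div_le_div₀ (by linarith) (abs_le.mpr ⟨by linarith, by linarith⟩) (by positivity) hden

theorem tendstoUniformlyOn_digammaSeries {a b : ℝ} (ha : 0 < a) (ha1 : a ≤ 1) :
    TendstoUniformlyOn (fun (n : ℕ) (y : ℝ) => log n - ∑ m ∈ Finset.range (n + 1), 1 / (y + m))
      digammaSeries atTop (Ioo a b) := by
  have hconst := tendsto_log_sub_sum_range_succ_one_div.tendstoUniformlyOn_const (Ioo a b)
  have hseries : TendstoUniformlyOn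
      (fun (n : ℕ) (y : ℝ) => ∑ m ∈ Finset.range (n + 1), (1 / ((m : ℝ) + 1) - 1 / (y + m)))
      (fun y => ∑' m : ℕ, (1 / ((m : ℝ) + 1) - 1 / (y + m))) atTop (Ioo a b) := fun u hu =>
    (tendsto_add_atTop_nat 1).eventually <| tendstoUniformlyOn_tsum_nat
      ((summable_one_div_add_sq ha).mul_left (1 + b) |>.congr fun m => by ring)
      (fun m y hy => abs_one_div_add_one_sub_one_div_add_le ha ha1 hy m) u hu
  refine (hconst.add hseries).congr (Eventually.of_forall fun n y _ => ?_)
  simp only [Pi.add_apply, Finset.sum_sub_distrib]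
  ring

theorem hasDerivAt_logGammaSeq (n : ℕ) {x : ℝ} (hx : 0 < x) :
    HasDerivAt (BohrMollerup.logGammaSeq · n)
      (log n - ∑ m ∈ Finset.range (n + 1), 1 / (x + m)) x := by
  have hsum : HasDerivAt (fun y => ∑ m ∈ Finset.range (n + 1), log (y + m))
      (∑ m ∈ Finset.range (n + 1), 1 / (x + m)) x :=
    HasDerivAt.fun_sum fun m _ => by
      simpa [one_div] using ((hasDerivAt_id x).add_const (m : ℝ)).log (by positivity)
  exact ((hasDerivAt_mul_const (log n)).add_const (log n.factorial)).sub hsum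

theorem hasDerivAt_log_Gamma {x : ℝ} (hx : 0 < x) :
    HasDerivAt (fun y => log (Gamma y)) (digammaSeries x) x := by
  obtain ⟨c, hc, hcx1⟩ := exists_between (lt_min hx one_pos)
  obtain ⟨hcx, hc1⟩ := lt_min_iff.mp hcx1
  exact hasDerivAt_of_tendstoUniformlyOn isOpen_Ioo
    (tendstoUniformlyOn_digammaSeries (b := x + 1) hc hc1.le)
    (Eventually.of_forall fun n y hy => hasDerivAt_logGammaSeq n (hc.trans hy.1))
    (fun y hy => BohrMollerup.tendsto_log_gamma (hc.trans hy.1)) ⟨hcx, by linarith⟩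

theorem digamma_eq_digammaSeries {x : ℝ} (hx : 0 < x) : digamma x = digammaSeries x := by
  have hΓ : DifferentiableAt ℝ Gamma x :=
    differentiableAt_Gamma fun m => by linarith [(m.cast_nonneg : (0 : ℝ) ≤ m)]
  exact (hΓ.hasDerivAt.log (Gamma_pos_of_pos hx).ne').unique (hasDerivAt_log_Gamma hx)

theorem hasDerivAt_digammaSeries {x : ℝ} (hx : 0 < x) :
    HasDerivAt digammaSeries (∑' m : ℕ, 1 / (x + m) ^ 2) x := by
  have hterm (m : ℕ) {y : ℝ} (hy : 0 < y) :
      HasDerivAt (fun z => 1 / ((m : ℝ) + 1) - 1 / (z + m)) (1 / (y + m) ^ 2) y := by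
    simpa [one_div, neg_div] using
      (((hasDerivAt_id y).add_const (m : ℝ)).inv (by positivity)).const_sub (1 / ((m : ℝ) + 1))
  obtain ⟨c, hc, hcx1⟩ := exists_between (lt_min hx one_pos)
  obtain ⟨hcx, hc1⟩ := lt_min_iff.mp hcx1
  have hbound (m : ℕ) {y : ℝ} (hy : y ∈ Ioi c) : ‖1 / (y + m) ^ 2‖ ≤ 1 / (c + m) ^ 2 := by
    rw [Real.norm_of_nonneg (by positivity)]
    gcongr
    exact hy.le
  -- the series converges at `y₀ = 1`, where every term vanishes
  refine (hasDerivAt_tsum_of_isPreconnected (summable_one_div_add_sq hc) isOpen_Ioi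
    isPreconnected_Ioi (fun m y hy => hterm m (hc.trans hy)) (fun m y hy => hbound m hy)
    (y₀ := 1) hc1 ?_ hcx).const_add _
  simp [add_comm]

theorem deriv_digamma {x : ℝ} (hx : 0 < x) : deriv digamma x = ∑' m : ℕ, 1 / (x + m) ^ 2 := by
  have h : digamma =ᶠ[𝓝 x] digammaSeries :=
    eventually_of_mem (isOpen_Ioi.mem_nhds hx) fun y hy => digamma_eq_digammaSeries hy
  rw [h.deriv_eq, (hasDerivAt_digammaSeries hx).deriv]

theorem hasSum_one_div_two_mul_add_one_sq :
    HasSum (fun n : ℕ => 1 / (2 * n + 1 : ℝ) ^ 2) (π ^ 2 / 8) := by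
  set f : ℕ → ℝ := fun n => 1 / (n : ℝ) ^ 2
  have hzeta : HasSum f (π ^ 2 / 6) := hasSum_zeta_two
  have heven : HasSum (fun k => f (2 * k)) (π ^ 2 / 24) := by
    rw [show π ^ 2 / 24 = 1 / 4 * (π ^ 2 / 6) by ring]
    refine (hzeta.mul_left (1 / 4)).congr_fun fun k => ?_
    simp only [f]
    push_cast
    ring
  have hinj : Function.Injective fun k : ℕ => 2 * k + 1 := fun a b h => by simpa using h
  obtain ⟨S, hodd⟩ := hzeta.summable.comp_injective hinj
  have hS : S = π ^ 2 / 8 := by linarith [(heven.even_add_odd (f := f) hodd).unique hzeta]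
  refine hS ▸ hodd.congr_fun fun k => ?_
  simp only [f, Function.comp]
  push_cast
  ring

theorem summable_one_div_four_mul_add_sq {r : ℝ} (hr : 0 < r) :
    Summable fun k : ℕ => 1 / (4 * k + r) ^ 2 := by
  refine ((summable_one_div_add_sq (by positivity : 0 < r / 4)).mul_left (1 / 16)).congr
    fun k => ?_
  field_simp
  ring

theorem tsum_one_div_four_mul_add_one_sq_add_three_sq :
    ∑' k : ℕ, 1 / (4 * k + 1 : ℝ) ^ 2 + ∑' k : ℕ, 1 / (4 * k + 3 : ℝ) ^ 2 = π ^ 2 / 8 := by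
  have he := (summable_one_div_four_mul_add_sq one_pos).hasSum
  have ho := (summable_one_div_four_mul_add_sq three_pos).hasSum
  refine (HasSum.even_add_odd (f := fun n : ℕ => 1 / (2 * n + 1 : ℝ) ^ 2)
    (he.congr_fun fun k => ?_) (ho.congr_fun fun k => ?_)).unique
    hasSum_one_div_two_mul_add_one_sq <;> push_cast <;> ring

theorem catalanConstant_eq_tsum_sub_tsum :
    catalanConstant = ∑' k : ℕ, 1 / (4 * k + 1 : ℝ) ^ 2 - ∑' k : ℕ, 1 / (4 * k + 3 : ℝ) ^ 2 := by
  have he := (summable_one_div_four_mul_add_sq one_pos).hasSum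
  have ho := (summable_one_div_four_mul_add_sq three_pos).hasSum.neg
  refine (HasSum.even_add_odd (f := fun n : ℕ => (-1) ^ n / (2 * n + 1 : ℝ) ^ 2)
    (he.congr_fun fun k => ?_) (ho.congr_fun fun k => ?_)).tsum_eq.trans (sub_eq_add_neg _ _).symm
  · rw [pow_mul, neg_one_sq, one_pow]; push_cast; ring
  · rw [pow_succ, pow_mul, neg_one_sq, one_pow]; push_cast; ring

theorem tsum_one_div_quarter_add_sq :
    ∑' m : ℕ, 1 / (1 / 4 + m : ℝ) ^ 2 = 16 * ∑' k : ℕ, 1 / (4 * k + 1 : ℝ) ^ 2 := by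
  rw [← tsum_mul_left]
  congr 1 with k
  field_simp
  ring

/-- `ψ'(1/4) = π² + 8G`. -/
theorem trigamma_one_quarter :
    deriv digamma (1/4) = π^2 + 8 * catalanConstant := by
  rw [deriv_digamma (by norm_num), tsum_one_div_quarter_add_sq, catalanConstant_eq_tsum_sub_tsum]
  linarith [tsum_one_div_four_mul_add_one_sq_add_three_sq]
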